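/- arXiv:math/0302075 — 6 statements merged into one kernel-verified Lean document; each statement's English description precedes it below -/
import Mathlib

section
/- A subgroup G of SL(2,ℂ) has a common eigenvector (i.e., there exists a nonzero vector v ∈ ℂ² such that every g ∈ G maps the line ℂ·v into itself) if and only if tr(g h g⁻¹ h⁻¹) = 2 for all g, h ∈ G. -/
/-!
For `k = g h g⁻¹ h⁻¹` in `SL(2)` we have `gh - hg = (k - 1) hg` and `det (k - 1) = 2 - tr k`, so
the trace condition says exactly that every `gh - hg` is singular. A common eigenvector lies in the
kernel of all of them.

Conversely, suppose some `g ∈ G` is not scalar, say `g y ∉ ℂ y`. Take an eigenvector `v` of `g`,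
with eigenvalue `μ`, and put `u = (g - μ) y`. Then
`det (gh - hg) · det[v, y]² = -det[v, hv] · det[u, hu]`, so every `h ∈ G` preserves the line
through `v` or the one through `u`. As a group is never the union of two proper subgroups, one of
these lines is preserved by all of `G`.
-/

open Matrix

section TwoByTwo

variable {R : Type*} [CommRing R]

theorem det_sub_one_fin_two (A : Matrix (Fin 2) (Fin 2) R) :
    (A - 1).det = A.det - A.trace + 1 := by
  simp [det_fin_two, trace_fin_two]
  ring

theorem det_of_mulVec_fin_two (A : Matrix (Fin 2) (Fin 2) R) (v w : Fin 2 → R) :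
    (of ![A *ᵥ v, A *ᵥ w]).det = A.det * (of ![v, w]).det := by
  simp [det_fin_two]
  ring

theorem det_of_smul_left_fin_two (c : R) (v w : Fin 2 → R) :
    (of ![c • v, w]).det = c * (of ![v, w]).det := by
  simp [det_fin_two]
  ring

theorem det_of_sub_right_fin_two (v w w' : Fin 2 → R) :
    (of ![v, w - w']).det = (of ![v, w]).det - (of ![v, w']).det := by
  simp [det_fin_two]
  ring

theorem det_of_smul_eq_add_fin_two (v x y : Fin 2 → R) :
    (of ![v, x]).det • y = (of ![y, x]).det • v + (of ![v, y]).det • x := by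
  ext i
  fin_cases i <;> simp [det_fin_two] <;> ring

theorem Matrix.SpecialLinearGroup.det_mul_sub_mul_eq_two_sub_trace
    (g h : SpecialLinearGroup (Fin 2) R) :
    ((g : Matrix (Fin 2) (Fin 2) R) * h - h * g).det =
      2 - trace
        ((g * h * g⁻¹ * h⁻¹ : SpecialLinearGroup (Fin 2) R) : Matrix (Fin 2) (Fin 2) R) := by
  have hfactor : (g : Matrix (Fin 2) (Fin 2) R) * h - h * g =
      ((g * h * g⁻¹ * h⁻¹ : SpecialLinearGroup (Fin 2) R) - 1) *
        (h * g : SpecialLinearGroup (Fin 2) R) := by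
    rw [sub_mul, one_mul, ← coe_mul, ← coe_mul, ← coe_mul]
    group
  rw [hfactor, det_mul, det_sub_one_fin_two, det_coe, det_coe]
  ring

end TwoByTwo

section Field

variable {K : Type*} [Field K]

theorem exists_eq_smul_of_det_of_eq_zero {v w : Fin 2 → K} (hv : v ≠ 0)
    (h : (of ![v, w]).det = 0) : ∃ c : K, w = c • v := by
  obtain ⟨a, ha, hav⟩ := exists_vecMul_eq_zero_iff.mpr h
  rw [vecMul_eq_sum, Fin.sum_univ_two] at hav
  change a 0 • v + a 1 • w = 0 at hav
  have ha1 : a 1 ≠ 0 := by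
    intro ha1
    rw [ha1, zero_smul, add_zero, smul_eq_zero] at hav
    exact hav.elim (fun ha0 => ha (by ext i; fin_cases i <;> simp [ha0, ha1])) hv
  have hw : a 1 • w = -a 0 • v := by
    rw [neg_smul]
    exact eq_neg_of_add_eq_zero_right hav
  exact ⟨-a 0 / a 1, by rw [div_eq_inv_mul, mul_smul, ← hw, inv_smul_smul₀ ha1]⟩

theorem det_mul_sub_mul_mul_sq_of_mulVec_eq_smul {g : Matrix (Fin 2) (Fin 2) K}
    {v : Fin 2 → K} {μ : K} (hv0 : v ≠ 0) (hv : g *ᵥ v = μ • v)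
    (h : Matrix (Fin 2) (Fin 2) K) (x : Fin 2 → K) :
    (g * h - h * g).det * (of ![v, x]).det ^ 2 =
      -((of ![v, h *ᵥ v]).det * (of ![g *ᵥ x - μ • x, h *ᵥ (g *ᵥ x - μ • x)]).det) := by
  set D := g - μ • (1 : Matrix (Fin 2) (Fin 2) K)
  have hDx : ∀ y, D *ᵥ y = g *ᵥ y - μ • y := fun y => by
    rw [sub_mulVec, smul_mulVec, one_mulVec]
  have hDv : D *ᵥ v = 0 := by rw [hDx, hv, sub_self]
  have hdetD : D.det = 0 := exists_mulVec_eq_zero_iff.mp ⟨v, hv0, hDv⟩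
  -- `D` kills `v`, so its image is the line through `D x`.
  have hrank : ∀ y, (of ![v, x]).det • D *ᵥ y = (of ![v, y]).det • D *ᵥ x := fun y => by
    rw [← mulVec_smul, det_of_smul_eq_add_fin_two v x y, mulVec_add, mulVec_smul, mulVec_smul,
      hDv, smul_zero, zero_add]
  have hN : g * h - h * g = D * h - h * D := by
    simp only [D, sub_mul, mul_sub, Matrix.smul_mul, Matrix.mul_smul, one_mul, mul_one]
    abel
  rw [← hDx x]
  set u := D *ᵥ x
  have hNv : (g * h - h * g) *ᵥ v = D *ᵥ (h *ᵥ v) := by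
    rw [hN, sub_mulVec, ← mulVec_mulVec, ← mulVec_mulVec, hDv, mulVec_zero, sub_zero]
  have hNx : (g * h - h * g) *ᵥ x = D *ᵥ (h *ᵥ x) - h *ᵥ u := by
    rw [hN, sub_mulVec, ← mulVec_mulVec, ← mulVec_mulVec]
  calc (g * h - h * g).det * (of ![v, x]).det ^ 2
      = (of ![(of ![v, x]).det • (g * h - h * g) *ᵥ v, (g * h - h * g) *ᵥ x]).det := by
        rw [det_of_smul_left_fin_two, det_of_mulVec_fin_two]; ring
    _ = (of ![v, h *ᵥ v]).det * (of ![u, D *ᵥ (h *ᵥ x) - h *ᵥ u]).det := by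
        rw [hNv, hrank, hNx, det_of_smul_left_fin_two]
    _ = (of ![v, h *ᵥ v]).det * (D.det * (of ![x, h *ᵥ x]).det - (of ![u, h *ᵥ u]).det) := by
        rw [det_of_sub_right_fin_two, det_of_mulVec_fin_two]
    _ = _ := by rw [hdetD]; ring

variable {ι : Type*} [Fintype ι] [DecidableEq ι]

theorem exists_mulVec_eq_smul [IsAlgClosed K] [Nonempty ι] (A : Matrix ι ι K) :
    ∃ (μ : K) (v : ι → K), v ≠ 0 ∧ A *ᵥ v = μ • v := by
  obtain ⟨μ, hμ⟩ := Module.End.exists_eigenvalue (toLin' A)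
  obtain ⟨v, hv⟩ := hμ.exists_hasEigenvector
  exact ⟨μ, v, hv.2, by simpa using Module.End.mem_eigenspace_iff.mp hv.1⟩

theorem det_mul_sub_mul_eq_zero_of_mulVec_eq_smul {A B : Matrix ι ι K} {v : ι → K} (hv : v ≠ 0)
    (hA : ∃ a : K, A *ᵥ v = a • v) (hB : ∃ b : K, B *ᵥ v = b • v) : (A * B - B * A).det = 0 := by
  obtain ⟨a, ha⟩ := hA
  obtain ⟨b, hb⟩ := hB
  refine exists_mulVec_eq_zero_iff.mp ⟨v, hv, ?_⟩
  rw [sub_mulVec, ← mulVec_mulVec, ← mulVec_mulVec, ha, hb, mulVec_smul, mulVec_smul, ha, hb,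
    smul_smul, smul_smul, mul_comm, sub_self]

def lineStabilizer (v : ι → K) : Subgroup (SpecialLinearGroup ι K) where
  carrier := {g | ∃ c : K, (g : Matrix ι ι K) *ᵥ v = c • v}
  one_mem' := ⟨1, by simp⟩
  mul_mem' := by
    rintro g h ⟨a, ha⟩ ⟨b, hb⟩
    exact ⟨a * b, by
      rw [Matrix.SpecialLinearGroup.coe_mul, ← mulVec_mulVec, hb, mulVec_smul, ha, smul_smul,
        mul_comm]⟩
  inv_mem' := by
    rintro g ⟨c, hc⟩
    have hv : v = c • (g⁻¹ : SpecialLinearGroup ι K) *ᵥ v := by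
      rw [← mulVec_smul, ← hc, mulVec_mulVec, ← Matrix.SpecialLinearGroup.coe_mul, inv_mul_cancel,
        Matrix.SpecialLinearGroup.coe_one, one_mulVec]
    rcases eq_or_ne c 0 with rfl | hc0
    · rw [zero_smul] at hv
      exact ⟨0, by rw [hv, mulVec_zero, smul_zero]⟩
    · exact ⟨c⁻¹, by rw [eq_inv_smul_iff₀ hc0, ← hv]⟩

theorem exists_le_lineStabilizer_of_det_mul_sub_mul_eq_zero [IsAlgClosed K]
    (G : Subgroup (SpecialLinearGroup (Fin 2) K))
    (hG : ∀ g ∈ G, ∀ h ∈ G, ((g : Matrix (Fin 2) (Fin 2) K) * h - h * g).det = 0) :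
    ∃ v : Fin 2 → K, v ≠ 0 ∧ G ≤ lineStabilizer v := by
  by_cases hscalar : ∀ g ∈ G, ∀ y, ∃ c : K, (g : Matrix (Fin 2) (Fin 2) K) *ᵥ y = c • y
  · exact ⟨Pi.single 0 1, by simp, fun g hg => hscalar g hg _⟩
  push Not at hscalar
  obtain ⟨g, hg, y, hy⟩ := hscalar
  obtain ⟨μ, v, hv0, hv⟩ := exists_mulVec_eq_smul (g : Matrix (Fin 2) (Fin 2) K)
  have hvy : (of ![v, y]).det ≠ 0 := by
    intro hvy
    obtain ⟨c, rfl⟩ := exists_eq_smul_of_det_of_eq_zero hv0 hvy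
    exact hy μ (by rw [mulVec_smul, hv, smul_comm])
  set u := (g : Matrix (Fin 2) (Fin 2) K) *ᵥ y - μ • y
  have hu : u ≠ 0 := sub_ne_zero.mpr (hy μ)
  have hcover : (G : Set (SpecialLinearGroup (Fin 2) K)) ⊆
      lineStabilizer v ∪ lineStabilizer u := by
    intro h hh
    have key := det_mul_sub_mul_mul_sq_of_mulVec_eq_smul hv0 hv h y
    rw [hG g hg h hh, zero_mul, eq_comm, neg_eq_zero] at key
    rcases mul_eq_zero.mp key with hvh | huh
    · exact Or.inl (exists_eq_smul_of_det_of_eq_zero hv0 hvh)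
    · exact Or.inr (exists_eq_smul_of_det_of_eq_zero hu huh)
  rcases SubgroupClass.subset_union.mp hcover with hle | hle
  exacts [⟨v, hv0, hle⟩, ⟨u, hu, hle⟩]

end Field

/-- A subgroup `G` of `SL(2,ℂ)` has a common eigenvector if and only if
`tr (g h g⁻¹ h⁻¹) = 2` for all `g, h ∈ G`. -/
theorem reducible_iff_trace_commutator_eq_two
    (G : Subgroup (SpecialLinearGroup (Fin 2) ℂ)) :
    (∃ v : Fin 2 → ℂ, v ≠ 0 ∧ ∀ g ∈ G,
        ∃ c : ℂ, (g : Matrix (Fin 2) (Fin 2) ℂ) *ᵥ v = c • v) ↔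
    (∀ g ∈ G, ∀ h ∈ G,
        Matrix.trace ((g * h * g⁻¹ * h⁻¹ : SpecialLinearGroup (Fin 2) ℂ)
          : Matrix (Fin 2) (Fin 2) ℂ) = 2) := by
  have htrace : ∀ g h : SpecialLinearGroup (Fin 2) ℂ,
      trace ((g * h * g⁻¹ * h⁻¹ : SpecialLinearGroup (Fin 2) ℂ) : Matrix (Fin 2) (Fin 2) ℂ) = 2 ↔
        ((g : Matrix (Fin 2) (Fin 2) ℂ) * h - h * g).det = 0 := fun g h => by
    rw [SpecialLinearGroup.det_mul_sub_mul_eq_two_sub_trace, sub_eq_zero, eq_comm]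
  simp only [htrace]
  constructor
  · rintro ⟨v, hv0, hv⟩ g hg h hh
    exact det_mul_sub_mul_eq_zero_of_mulVec_eq_smul hv0 (hv g hg) (hv h hh)
  · intro hG
    obtain ⟨v, hv0, hle⟩ := exists_le_lineStabilizer_of_det_mul_sub_mul_eq_zero G hG
    exact ⟨v, hv0, fun g hg => hle hg⟩
end

section
/- Let G be a subgroup of SL(2,ℂ) such that g h g⁻¹ h⁻¹ ∈ {I, −I} for all g, h ∈ G (i.e., the image of G in PSL(2,ℂ) is abelian), and suppose G has no common eigenvector. Then there exists C ∈ SL(2,ℂ) such that C G C⁻¹ is contained in the quaternion group Q₈ = {±I, ±[[i,0],[0,−i]], ±[[0,1],[−1,0]], ±[[0,i],[i,0]]}, and the image of G in PSL(2,ℂ) has exactly four elements (it is a Klein four-group). -/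
open Matrix

/-- The quaternion group `Q₈` inside `SL(2,ℂ)`, described as a set of matrices:
`±I, ±[[i,0],[0,−i]], ±[[0,1],[−1,0]], ±[[0,i],[i,0]]`. -/
noncomputable def Q8set : Set (Matrix (Fin 2) (Fin 2) ℂ) :=
  {1, -1,
    !![Complex.I, 0; 0, -Complex.I], -!![Complex.I, 0; 0, -Complex.I],
    !![0, 1; -1, 0], -!![0, 1; -1, 0],
    !![0, Complex.I; Complex.I, 0], -!![0, Complex.I; Complex.I, 0]}

/-!
If `G` is abelian, a non-scalar element of `G` has a one-dimensional eigenspace, which every other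
element preserves; so `G` has a common eigenvector. Otherwise two elements `a, b ∈ G` anticommute.
Then `a` and `b` have trace zero, so `a² = b² = -1`, and in the basis formed by an
`i`-eigenvector `v` of `a` and `-b v` they become the quaternion units `i` and `j`. An element of
`G` commutes or anticommutes with each of `a` and `b`; multiplying it by the element of
`{1, a, b, ab}` with the same pattern gives an element commuting with `a` and `b`, hence `±1`.
So `G ⊆ ±{1, a, b, ab}`, which is conjugate to `Q₈`, and `G` maps onto `{1, a, b, ab}` modulo
`±1`.
-/

open Module
open scoped MatrixGroups

theorem Module.End.exists_common_eigenvector_of_finrank_eq_two {K V : Type*} [Field K]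
    [IsAlgClosed K] [AddCommGroup V] [Module K V] (hV : finrank K V = 2) (S : Set (End K V))
    (hS : ∀ f ∈ S, ∀ g ∈ S, Commute f g) :
    ∃ v : V, v ≠ 0 ∧ ∀ f ∈ S, ∃ c : K, f v = c • v := by
  have : FiniteDimensional K V := Module.finite_of_finrank_eq_succ hV
  have : Nontrivial V := Module.nontrivial_of_finrank_eq_succ hV
  by_cases hscalar : ∀ f ∈ S, ∃ c : K, f = c • 1
  · obtain ⟨v, hv⟩ := exists_ne (0 : V)
    refine ⟨v, hv, fun f hf => ?_⟩
    obtain ⟨c, rfl⟩ := hscalar f hf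
    exact ⟨c, rfl⟩
  push Not at hscalar
  obtain ⟨f₀, hf₀, hf₀_ne⟩ := hscalar
  obtain ⟨μ, hμ⟩ := f₀.exists_eigenvalue
  obtain ⟨v, hv⟩ := hμ.exists_hasEigenvector
  have hE_ne_top : f₀.eigenspace μ ≠ ⊤ := fun h =>
    hf₀_ne μ (LinearMap.ext fun x => mem_eigenspace_iff.mp (h ▸ Submodule.mem_top))
  have hv' : (⟨v, hv.1⟩ : f₀.eigenspace μ) ≠ 0 := by simpa using hv.2
  have hE : finrank K (f₀.eigenspace μ) = 1 := by
    have := Submodule.finrank_lt hE_ne_top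
    have := finrank_pos_iff_exists_ne_zero (R := K).mpr ⟨_, hv'⟩
    omega
  refine ⟨v, hv.2, fun f hf => ?_⟩
  have hfv : f v ∈ f₀.eigenspace μ := mapsTo_genEigenspace_of_comm (hS f₀ hf₀ f hf) μ 1 hv.1
  obtain ⟨c, hc⟩ := (finrank_eq_one_iff_of_nonzero' _ hv').mp hE ⟨f v, hfv⟩
  exact ⟨c, (congrArg Subtype.val hc).symm⟩

theorem Matrix.exists_common_eigenvector_of_commute {K : Type*} [Field K] [IsAlgClosed K]
    (S : Set (Matrix (Fin 2) (Fin 2) K)) (hS : ∀ A ∈ S, ∀ B ∈ S, Commute A B) :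
    ∃ v : Fin 2 → K, v ≠ 0 ∧ ∀ A ∈ S, ∃ c : K, A *ᵥ v = c • v := by
  obtain ⟨v, hv, hSv⟩ := End.exists_common_eigenvector_of_finrank_eq_two (finrank_fin_fun K)
    (toLin' '' S) (by
      rintro _ ⟨A, hA, rfl⟩ _ ⟨B, hB, rfl⟩
      rw [Commute, SemiconjBy, End.mul_eq_comp, End.mul_eq_comp, ← toLin'_mul, ← toLin'_mul,
        (hS A hA B hB).eq])
  exact ⟨v, hv, fun A hA => by simpa using hSv _ ⟨A, hA, rfl⟩⟩

def AntiCommute {M : Type*} [Mul M] [HasDistribNeg M] (a b : M) : Prop := a * b = -(b * a)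

namespace AntiCommute

variable {M : Type*} [Monoid M] [HasDistribNeg M] {a b c : M}

theorem symm (h : AntiCommute a b) : AntiCommute b a := by
  rw [AntiCommute, h, neg_neg]

theorem mul_left (hac : AntiCommute a c) (hbc : AntiCommute b c) : Commute (a * b) c := by
  rw [Commute, SemiconjBy, mul_assoc, hbc, mul_neg, ← mul_assoc, hac, neg_mul, neg_neg, mul_assoc]

theorem mul_left_commute (hac : AntiCommute a c) (hbc : Commute b c) :
    AntiCommute (a * b) c := by
  rw [AntiCommute, mul_assoc, hbc.eq, ← mul_assoc, hac, neg_mul, mul_assoc]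

theorem _root_.Commute.mul_left_antiCommute (hac : Commute a c) (hbc : AntiCommute b c) :
    AntiCommute (a * b) c := by
  rw [AntiCommute, mul_assoc, hbc, mul_neg, ← mul_assoc, hac.eq, mul_assoc]

theorem mul_self_mul_self (hab : AntiCommute a b) (ha : a * a = -1) (hb : b * b = -1) :
    a * b * (a * b) = -1 := by
  rw [mul_assoc, ← mul_assoc b, hab.symm, neg_mul, mul_neg, mul_assoc, ← mul_assoc a a, ha, hb,
    neg_one_mul, neg_neg]

theorem exists_eq_or_eq_neg (hab : AntiCommute a b) (ha : a * a = -1) (hb : b * b = -1)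
    (hcent : ∀ z : M, Commute z a → Commute z b → z = 1 ∨ z = -1) {g : M}
    (hga : Commute g a ∨ AntiCommute g a) (hgb : Commute g b ∨ AntiCommute g b) :
    ∃ y ∈ ({1, a, b, a * b} : Set M), g = y ∨ g = -y := by
  have of_mul {y : M} (hy : y * y = -1) (hya : Commute (g * y) a) (hyb : Commute (g * y) b) :
      g = y ∨ g = -y := by
    have hg : g = -(g * y * y) := by rw [mul_assoc, hy, mul_neg_one, neg_neg]
    rcases hcent _ hya hyb with h | h <;> rw [h] at hg <;>
      simp only [hg, one_mul, neg_one_mul, neg_neg, true_or, or_true]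
  rcases hga with hga | hga <;> rcases hgb with hgb | hgb
  · exact ⟨1, by simp, by simpa using hcent g hga hgb⟩
  · exact ⟨a, by simp, of_mul ha (hga.mul_left (.refl a)) (hgb.mul_left hab)⟩
  · exact ⟨b, by simp, of_mul hb (hga.mul_left hab.symm) (hgb.mul_left (.refl b))⟩
  · exact ⟨a * b, by simp, of_mul (hab.mul_self_mul_self ha hb)
      (hga.mul_left ((Commute.refl a).mul_left_antiCommute hab.symm))
      (hgb.mul_left (hab.mul_left_commute (.refl b)))⟩

end AntiCommute

theorem Matrix.trace_eq_zero_of_antiCommute {n R : Type*} [Fintype n] [DecidableEq n]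
    [CommRing R] [NoZeroDivisors R] [CharZero R] {A B : Matrix n n R} (hB : IsUnit B.det)
    (h : AntiCommute A B) : A.trace = 0 := by
  have : A.trace = -A.trace := calc
    A.trace = (A * B * B⁻¹).trace := by rw [mul_nonsing_inv_cancel_right _ _ hB]
    _ = -(B * A * B⁻¹).trace := by rw [h, neg_mul, trace_neg]
    _ = -A.trace := by rw [mul_assoc, trace_mul_comm, nonsing_inv_mul_cancel_right _ _ hB]
  exact CharZero.eq_neg_self_iff.mp this

theorem Matrix.mul_self_eq_neg_one_of_trace_eq_zero {R : Type*} [CommRing R] [Nontrivial R]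
    {A : Matrix (Fin 2) (Fin 2) R} (hdet : A.det = 1) (htr : A.trace = 0) : A * A = -1 := by
  have := A.aeval_self_charpoly
  rw [charpoly_fin_two, htr, hdet] at this
  simpa [sq, add_eq_zero_iff_eq_neg] using this

theorem Matrix.mulVec_mulVec_eq_neg_smul_of_antiCommute {n R : Type*} [Fintype n] [CommRing R]
    {a b : Matrix n n R} (hab : AntiCommute a b) {v : n → R} {μ : R} (hv : a *ᵥ v = μ • v) :
    a *ᵥ (b *ᵥ v) = -μ • (b *ᵥ v) := by
  rw [mulVec_mulVec, hab, neg_mulVec, ← mulVec_mulVec, hv, mulVec_smul, neg_smul]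

theorem Matrix.exists_det_smul_eq_one {n K : Type*} [Fintype n] [DecidableEq n] [Nonempty n]
    [Field K] [IsAlgClosed K] {P : Matrix n n K} (hP : P.det ≠ 0) : ∃ c : K, (c • P).det = 1 := by
  obtain ⟨c, hc⟩ := IsAlgClosed.exists_pow_nat_eq P.det⁻¹ (Fintype.card_pos (α := n))
  exact ⟨c, by rw [det_smul, hc, inv_mul_cancel₀ hP]⟩

namespace Matrix.SpecialLinearGroup

variable {n R : Type*} [Fintype n] [DecidableEq n] [CommRing R] [Fact (Even (Fintype.card n))]

theorem antiCommute_coe {a b : SpecialLinearGroup n R} :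
    AntiCommute (a : Matrix n n R) b ↔ AntiCommute a b :=
  ⟨fun h => Subtype.ext h, fun h => congrArg Subtype.val h⟩

theorem commute_or_antiCommute_of_commutator {g h : SpecialLinearGroup n R}
    (hgh : ((g * h * g⁻¹ * h⁻¹ : SpecialLinearGroup n R) : Matrix n n R) = 1 ∨
      ((g * h * g⁻¹ * h⁻¹ : SpecialLinearGroup n R) : Matrix n n R) = -1) :
    Commute g h ∨ AntiCommute g h := by
  have hmul : g * h = g * h * g⁻¹ * h⁻¹ * (h * g) := by group
  rcases hgh with h1 | h1
  · left
    rwa [show g * h * g⁻¹ * h⁻¹ = 1 from Subtype.ext h1, one_mul] at hmul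
  · right
    rwa [show g * h * g⁻¹ * h⁻¹ = -1 from Subtype.ext h1, neg_one_mul] at hmul

theorem mul_self_eq_neg_one_of_antiCommute {K : Type*} [Field K] [CharZero K] {a b : SL(2, K)}
    (h : AntiCommute a b) : a * a = -1 :=
  Subtype.ext <| mul_self_eq_neg_one_of_trace_eq_zero a.det_coe <|
    trace_eq_zero_of_antiCommute (by simp) (antiCommute_coe.mpr h)

end Matrix.SpecialLinearGroup

def quatI : SL(2, ℂ) := ⟨!![Complex.I, 0; 0, -Complex.I], by simp [det_fin_two_of]⟩

def quatJ : SL(2, ℂ) := ⟨!![0, 1; -1, 0], by simp [det_fin_two_of]⟩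

theorem coe_quatI : (quatI : Matrix (Fin 2) (Fin 2) ℂ) = !![Complex.I, 0; 0, -Complex.I] := rfl

theorem coe_quatJ : (quatJ : Matrix (Fin 2) (Fin 2) ℂ) = !![0, 1; -1, 0] := rfl

theorem coe_mem_Q8set {y : SL(2, ℂ)}
    (hy : y ∈ ({1, quatI, quatJ, quatI * quatJ} : Set SL(2, ℂ))) :
    (y : Matrix (Fin 2) (Fin 2) ℂ) ∈ Q8set ∧
      ((-y : SL(2, ℂ)) : Matrix (Fin 2) (Fin 2) ℂ) ∈ Q8set := by
  rcases hy with rfl | rfl | rfl | rfl <;> simp [Q8set, coe_quatI, coe_quatJ]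

theorem eq_one_or_eq_neg_one_of_commute_quatI_quatJ {z : SL(2, ℂ)} (hI : Commute z quatI)
    (hJ : Commute z quatJ) : z = 1 ∨ z = -1 := by
  have hI' : (z : Matrix (Fin 2) (Fin 2) ℂ) * quatI = quatI * z := congrArg Subtype.val hI.eq
  have hJ' : (z : Matrix (Fin 2) (Fin 2) ℂ) * quatJ = quatJ * z := congrArg Subtype.val hJ.eq
  have h01 : z 0 1 = 0 := by
    simpa [coe_quatI, mul_apply, Fin.sum_univ_two, mul_comm, CharZero.neg_eq_self_iff,
      Complex.I_ne_zero] using congrFun₂ hI' 0 1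
  have h10 : z 1 0 = 0 := by
    simpa [coe_quatI, mul_apply, Fin.sum_univ_two, mul_comm, CharZero.eq_neg_self_iff,
      Complex.I_ne_zero] using congrFun₂ hI' 1 0
  have h00 : z 0 0 = z 1 1 := by
    simpa [coe_quatJ, mul_apply, Fin.sum_univ_two] using congrFun₂ hJ' 0 1
  have hsq : z 0 0 * z 0 0 = 1 := by
    have hdet := z.det_coe
    rw [det_fin_two] at hdet
    linear_combination hdet + z 0 0 * h00 + z 1 0 * h01
  rcases mul_self_eq_one_iff.mp hsq with h | h
  · left; ext i j; fin_cases i <;> fin_cases j <;> simp [h, h01, h10, ← h00]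
  · right; ext i j; fin_cases i <;> fin_cases j <;> simp [h, h01, h10, ← h00]

theorem Matrix.exists_mulVec_eq_I_smul {a : Matrix (Fin 2) (Fin 2) ℂ} (ha : a * a = -1)
    (hdet : a.det = 1) : ∃ v ≠ 0, a *ᵥ v = Complex.I • v := by
  have hne : a + Complex.I • 1 ≠ 0 := by
    intro h
    rw [eq_neg_of_add_eq_zero_left h] at hdet
    norm_num [det_fin_two] at hdet
  obtain ⟨e, he⟩ : ∃ e, (a + Complex.I • 1) *ᵥ e ≠ 0 := by
    by_contra! h
    exact hne (ext_of_mulVec_single fun i => by rw [h, zero_mulVec])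
  refine ⟨_, he, ?_⟩
  have : a * (a + Complex.I • 1) = Complex.I • (a + Complex.I • 1) := by
    rw [mul_add, ha, Matrix.mul_smul, mul_one, smul_add, smul_smul, Complex.I_mul_I, neg_one_smul,
      add_comm]
  rw [mulVec_mulVec, this, smul_mulVec]

theorem Matrix.exists_det_ne_zero_mul_eq_mul_quatI_quatJ {a b : Matrix (Fin 2) (Fin 2) ℂ}
    (hab : AntiCommute a b) (ha : a * a = -1) (hb : b * b = -1) (hdet : a.det = 1) :
    ∃ P : Matrix (Fin 2) (Fin 2) ℂ, P.det ≠ 0 ∧ a * P = P * quatI ∧ b * P = P * quatJ := by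
  obtain ⟨v, hv0, hv⟩ := exists_mulVec_eq_I_smul ha hdet
  set w := -(b *ᵥ v) with hw_def
  have hw : a *ᵥ w = -Complex.I • w := by
    rw [hw_def, mulVec_neg, mulVec_mulVec_eq_neg_smul_of_antiCommute hab hv, smul_neg]
  have hbv : b *ᵥ v = -w := (neg_neg _).symm
  have hbw : b *ᵥ w = v := by
    rw [hw_def, mulVec_neg, mulVec_mulVec, hb, neg_mulVec, one_mulVec, neg_neg]
  have hw0 : w ≠ 0 := fun h => hv0 (by rw [← hbw, h, mulVec_zero])
  have hli : LinearIndependent ℂ ![v, w] := by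
    refine End.eigenvectors_linearIndependent' (toLin' a) ![Complex.I, -Complex.I] ?_ ![v, w] ?_
    · intro i j h
      fin_cases i <;> fin_cases j <;>
        simp [CharZero.eq_neg_self_iff, CharZero.neg_eq_self_iff] at h ⊢
    · intro i
      fin_cases i
      · exact ⟨End.mem_eigenspace_iff.mpr hv, hv0⟩
      · exact ⟨End.mem_eigenspace_iff.mpr hw, hw0⟩
  refine ⟨(of ![v, w])ᵀ, ?_, ?_, ?_⟩
  · rw [← isUnit_iff_ne_zero, ← isUnit_iff_isUnit_det, isUnit_transpose,
      ← linearIndependent_rows_iff_isUnit]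
    exact hli
  · ext i j
    fin_cases j
    · simpa [mul_apply, mulVec, dotProduct, Fin.sum_univ_two, coe_quatI, mul_comm]
        using congrFun hv i
    · simpa [mul_apply, mulVec, dotProduct, Fin.sum_univ_two, coe_quatI, mul_comm]
        using congrFun hw i
  · ext i j
    fin_cases j
    · simpa [mul_apply, mulVec, dotProduct, Fin.sum_univ_two, coe_quatJ, mul_comm]
        using congrFun hbv i
    · simpa [mul_apply, mulVec, dotProduct, Fin.sum_univ_two, coe_quatJ, mul_comm]
        using congrFun hbw i

theorem AntiCommute.exists_conj_eq_quatI_quatJ {a b : SL(2, ℂ)} (hab : AntiCommute a b) :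
    ∃ C : SL(2, ℂ), C * a * C⁻¹ = quatI ∧ C * b * C⁻¹ = quatJ := by
  open SpecialLinearGroup in
  obtain ⟨P, hP, haP, hbP⟩ := exists_det_ne_zero_mul_eq_mul_quatI_quatJ (antiCommute_coe.mpr hab)
    (congrArg Subtype.val (mul_self_eq_neg_one_of_antiCommute hab))
    (congrArg Subtype.val (mul_self_eq_neg_one_of_antiCommute hab.symm)) a.det_coe
  obtain ⟨c, hc⟩ := exists_det_smul_eq_one hP
  let Q : SL(2, ℂ) := ⟨c • P, hc⟩
  have conj {x y : SL(2, ℂ)} (h : (x : Matrix (Fin 2) (Fin 2) ℂ) * P = P * y) :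
      Q⁻¹ * x * Q⁻¹⁻¹ = y := by
    have hQ : x * Q = Q * y := Subtype.ext <| by
      change (x : Matrix (Fin 2) (Fin 2) ℂ) * (c • P) = (c • P) * y
      rw [Matrix.mul_smul, h, Matrix.smul_mul]
    rw [inv_inv, mul_assoc, hQ, ← mul_assoc, inv_mul_cancel, one_mul]
  exact ⟨Q⁻¹, conj haP, conj hbP⟩

theorem eq_one_or_eq_neg_one_of_commute_of_conj {C a b z : SL(2, ℂ)} (ha : C * a * C⁻¹ = quatI)
    (hb : C * b * C⁻¹ = quatJ) (hza : Commute z a) (hzb : Commute z b) : z = 1 ∨ z = -1 := by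
  have hz : z = C⁻¹ * (C * z * C⁻¹) * C := by group
  rcases eq_one_or_eq_neg_one_of_commute_quatI_quatJ (ha ▸ (Commute.conj_iff C).mpr hza)
    (hb ▸ (Commute.conj_iff C).mpr hzb) with h | h <;> rw [h] at hz <;> simp [hz]

theorem coe_conj_mem_Q8set {C a b g : SL(2, ℂ)} (ha : C * a * C⁻¹ = quatI)
    (hb : C * b * C⁻¹ = quatJ) (hg : ∃ x ∈ ({1, a, b, a * b} : Set SL(2, ℂ)), g = x ∨ g = -x) :
    ((C * g * C⁻¹ : SL(2, ℂ)) : Matrix (Fin 2) (Fin 2) ℂ) ∈ Q8set := by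
  obtain ⟨x, hx, hgx⟩ := hg
  have hCx : C * x * C⁻¹ ∈ ({1, quatI, quatJ, quatI * quatJ} : Set SL(2, ℂ)) := by
    rcases hx with rfl | rfl | rfl | rfl
    · simp
    · simp [ha]
    · simp [hb]
    · simp [← ha, ← hb, mul_assoc]
  rcases hgx with rfl | rfl
  · exact (coe_mem_Q8set hCx).1
  · rw [mul_neg, neg_mul]
    exact (coe_mem_Q8set hCx).2

open Subgroup in
theorem QuotientGroup.coe_neg_center {M : Type*} [Group M] [HasDistribNeg M] (x : M) :
    ((-x : M) : M ⧸ center M) = x := by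
  rw [← neg_one_mul, QuotientGroup.mk_mul, (QuotientGroup.eq_one_iff _).mpr, one_mul]
  exact mem_center_iff.mpr fun z => by rw [mul_neg_one, neg_one_mul]

open Subgroup in
theorem Subgroup.coe_map_mk_center_eq {M : Type*} [Group M] [HasDistribNeg M] {H : Subgroup M}
    {a b : M} (ha : a ∈ H) (hb : b ∈ H)
    (hH : ∀ g ∈ H, ∃ x ∈ ({1, a, b, a * b} : Set M), g = x ∨ g = -x) :
    (H.map (QuotientGroup.mk' (center M)) : Set (M ⧸ center M)) =
      {1, (a : M ⧸ center M), (b : M ⧸ center M), ((a * b : M) : M ⧸ center M)} := by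
  ext y
  simp only [coe_map, QuotientGroup.coe_mk', Set.mem_image, SetLike.mem_coe]
  constructor
  · rintro ⟨g, hg, rfl⟩
    obtain ⟨x, hx, rfl | rfl⟩ := hH g hg <;>
      rcases hx with rfl | rfl | rfl | rfl <;> simp [QuotientGroup.coe_neg_center]
  · rintro (rfl | rfl | rfl | rfl)
    exacts [⟨1, H.one_mem, rfl⟩, ⟨a, ha, rfl⟩, ⟨b, hb, rfl⟩, ⟨a * b, H.mul_mem ha hb, rfl⟩]

open Subgroup in
theorem QuotientGroup.ncard_center_eq_four {M : Type*} [Group M] {a b : M} (hab : ¬Commute a b) :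
    ({1, (a : M ⧸ center M), (b : M ⧸ center M), ((a * b : M) : M ⧸ center M)} :
      Set (M ⧸ center M)).ncard = 4 := by
  have central {x : M} (hx : (x : M ⧸ center M) = 1) (y : M) : Commute x y :=
    (mem_center_iff.mp ((QuotientGroup.eq_one_iff x).mp hx) y).symm
  have ha : (a : M ⧸ center M) ≠ 1 := fun h => hab (central h b)
  have hb : (b : M ⧸ center M) ≠ 1 := fun h => hab (central h a).symm
  have hab' : (a : M ⧸ center M) ≠ b := fun h => hab <| by
    simpa using ((Commute.refl a).mul_left (central (x := a⁻¹ * b) (by simp [h]) a)).symm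
  have habne : ((a * b : M) : M ⧸ center M) ≠ 1 := fun h => hab <| by
    simpa using ((Commute.refl a).inv_left.mul_left (central h a)).symm
  rw [Set.ncard_insert_of_notMem, Set.ncard_insert_of_notMem, Set.ncard_pair]
  · simpa using ha
  · simp [hab', hb]
  · simp only [Set.mem_insert_iff, Set.mem_singleton_iff, not_or]
    exact ⟨ha.symm, hb.symm, habne.symm⟩

/-- If `G ≤ SL(2,ℂ)` satisfies `g h g⁻¹ h⁻¹ ∈ {I, −I}` for all `g, h ∈ G`
(its image in `PSL(2,ℂ)` is abelian) and `G` has no common eigenvector, then `G` is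
conjugate to a subgroup of the quaternion group `Q₈`, and the image of `G` in
`PSL(2,ℂ)` has exactly four elements. -/
theorem conj_into_Q8_of_projectively_abelian_irreducible
    (G : Subgroup (SpecialLinearGroup (Fin 2) ℂ))
    (habel : ∀ g ∈ G, ∀ h ∈ G,
      ((g * h * g⁻¹ * h⁻¹ : SpecialLinearGroup (Fin 2) ℂ) : Matrix (Fin 2) (Fin 2) ℂ) = 1 ∨
      ((g * h * g⁻¹ * h⁻¹ : SpecialLinearGroup (Fin 2) ℂ) : Matrix (Fin 2) (Fin 2) ℂ) = -1)
    (hirr : ¬ ∃ v : Fin 2 → ℂ, v ≠ 0 ∧ ∀ g ∈ G,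
      ∃ c : ℂ, (g : Matrix (Fin 2) (Fin 2) ℂ) *ᵥ v = c • v) :
    (∃ C : SpecialLinearGroup (Fin 2) ℂ, ∀ g ∈ G,
      ((C * g * C⁻¹ : SpecialLinearGroup (Fin 2) ℂ) : Matrix (Fin 2) (Fin 2) ℂ) ∈ Q8set) ∧
    Nat.card
      (G.map (QuotientGroup.mk' (Subgroup.center (SpecialLinearGroup (Fin 2) ℂ)))) = 4 := by
  open SpecialLinearGroup in
  by_cases hcomm : ∀ g ∈ G, ∀ h ∈ G, Commute g h
  · obtain ⟨v, hv, hGv⟩ := exists_common_eigenvector_of_commute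
      (Subtype.val '' (G : Set SL(2, ℂ)))
      (by rintro _ ⟨g, hg, rfl⟩ _ ⟨h, hh, rfl⟩; exact congrArg Subtype.val (hcomm g hg h hh))
    exact (hirr ⟨v, hv, fun g hg => hGv _ ⟨g, hg, rfl⟩⟩).elim
  push Not at hcomm
  obtain ⟨a, ha, b, hb, hab⟩ := hcomm
  have hpattern {g} (hg : g ∈ G) {h} (hh : h ∈ G) : Commute g h ∨ AntiCommute g h :=
    commute_or_antiCommute_of_commutator (habel g hg h hh)
  have hab' : AntiCommute a b := (hpattern ha hb).resolve_left hab
  obtain ⟨C, hCa, hCb⟩ := hab'.exists_conj_eq_quatI_quatJ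
  have hG : ∀ g ∈ G, ∃ x ∈ ({1, a, b, a * b} : Set SL(2, ℂ)), g = x ∨ g = -x := fun g hg =>
    hab'.exists_eq_or_eq_neg (mul_self_eq_neg_one_of_antiCommute hab')
      (mul_self_eq_neg_one_of_antiCommute hab'.symm)
      (fun z => eq_one_or_eq_neg_one_of_commute_of_conj hCa hCb) (hpattern hg ha) (hpattern hg hb)
  refine ⟨⟨C, fun g hg => coe_conj_mem_Q8set hCa hCb (hG g hg)⟩, ?_⟩
  rw [← SetLike.coe_sort_coe, G.coe_map_mk_center_eq ha hb hG, Nat.card_coe_set_eq]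
  exact QuotientGroup.ncard_center_eq_four hab
end

section
/- Let G be a subgroup of SL(2,ℂ) with no common eigenvector, and let Ḡ denote its image in PSL(2,ℂ). Then the centralizer of Ḡ in PSL(2,ℂ) is nontrivial if and only if the conjugation action of G on sl(2,ℂ) (the space of trace-zero 2×2 complex matrices, G acting by X ↦ g X g⁻¹) admits a ℂ-subspace that is invariant under this action and is neither 0 nor all of sl(2,ℂ). -/
open Matrix

/-- `PSL(2,ℂ)`: the quotient of `SL(2,ℂ)` by its center `{I, −I}`. -/
abbrev PSL2 : Type :=
  SpecialLinearGroup (Fin 2) ℂ ⧸ Subgroup.center (SpecialLinearGroup (Fin 2) ℂ)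

/-- The canonical projection `SL(2,ℂ) → PSL(2,ℂ)`. -/
abbrev pslProj : SpecialLinearGroup (Fin 2) ℂ →* PSL2 :=
  QuotientGroup.mk' (Subgroup.center (SpecialLinearGroup (Fin 2) ℂ))

/-- `sl(2,ℂ)`: the complex vector space of trace-zero `2 × 2` complex matrices. -/
noncomputable def sl2 : Submodule ℂ (Matrix (Fin 2) (Fin 2) ℂ) :=
  LinearMap.ker (Matrix.traceLinearMap (Fin 2) ℂ ℂ)

/-!
If the class of `h ∈ SL₂` commutes with every `ḡ`, then `g h g⁻¹ = ±h`, so the traceless part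
of a non-central `h` spans an `Ad(G)`-invariant line in `sl₂`. Conversely, an invariant subspace
of `sl₂` of dimension one is such a line, and one of dimension two contains the invariant line
spanned by the bracket of a basis, which is nonzero because commuting elements of `sl₂` are
proportional. If `X` spans an invariant line, then `g X g⁻¹ = ±X` once `X` is rescaled to
determinant one, which produces a nontrivial element of the centralizer. The rescaling fails only
when `X` is nilpotent, and then `ker X` is a common eigenline of `G`.
-/

open Module Submodule

attribute [local instance] LieRing.ofAssociativeRing

section LieSpan

variable {R L : Type*} [CommRing R] [LieRing L] [LieAlgebra R L]

theorem lie_mem_span_lie_of_mem_span_pair {x y a b : L} (ha : a ∈ span R {x, y})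
    (hb : b ∈ span R {x, y}) : ⁅a, b⁆ ∈ R ∙ ⁅x, y⁆ := by
  obtain ⟨s, t, rfl⟩ := mem_span_pair.1 ha
  obtain ⟨u, v, rfl⟩ := mem_span_pair.1 hb
  refine mem_span_singleton.2 ⟨s * v - t * u, ?_⟩
  simp only [add_lie, lie_add, smul_lie, lie_smul, lie_self, ← lie_skew y x]
  module

theorem lie_eq_zero_of_mem_span_singleton {x a b : L} (ha : a ∈ R ∙ x) (hb : b ∈ R ∙ x) :
    ⁅a, b⁆ = 0 := by
  obtain ⟨s, rfl⟩ := mem_span_singleton.1 ha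
  obtain ⟨t, rfl⟩ := mem_span_singleton.1 hb
  simp

end LieSpan

theorem exists_linearIndependent_pair_eq_span_of_finrank_eq_two {K V : Type*} [Field K]
    [AddCommGroup V] [Module K V] {W : Submodule K V} (h : finrank K W = 2) :
    ∃ x y : V, LinearIndependent K ![x, y] ∧ W = span K {x, y} := by
  have : Module.Finite K W := Module.finite_of_finrank_eq_succ h
  let b := Module.finBasisOfFinrankEq K W h
  refine ⟨b 0, b 1, ?_, le_antisymm (fun w hw => mem_span_pair.2 ?_) ?_⟩
  · have hb := b.linearIndependent.map' W.subtype W.ker_subtype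
    rwa [show W.subtype ∘ b = ![(b 0 : V), b 1] by ext i : 1; fin_cases i <;> rfl] at hb
  · have := congrArg Subtype.val (b.sum_repr ⟨w, hw⟩)
    rw [Fin.sum_univ_two] at this
    exact ⟨_, _, this⟩
  · rw [span_le]
    rintro _ (rfl | rfl) <;> simp

theorem exists_smul_eq_of_mulVec_eq_zero {K : Type*} [Field K] {A : Matrix (Fin 2) (Fin 2) K}
    (hA : A ≠ 0) {v w : Fin 2 → K} (hv : v ≠ 0) (hAv : A *ᵥ v = 0) (hAw : A *ᵥ w = 0) :
    ∃ c : K, c • v = w := by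
  by_contra! h
  have hvw : LinearIndependent K ![v, w] := (LinearIndependent.pair_iff' hv).2 h
  let b := basisOfLinearIndependentOfCardEqFinrank hvw (by simp)
  have : A.mulVecLin = 0 := b.ext fun i => by fin_cases i <;> simp [b, hAv, hAw]
  exact hA (Matrix.toLin'.map_eq_zero_iff.1 this)

namespace Matrix.SpecialLinearGroup

variable {n R : Type*} [Fintype n] [DecidableEq n] [CommRing R]

local notation:1024 "↑ₘ" A:1024 => ((A : SpecialLinearGroup n R) : Matrix n n R)

theorem mem_center_iff_exists_coe_eq_smul_one {A : SpecialLinearGroup n R} :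
    A ∈ Subgroup.center (SpecialLinearGroup n R) ↔ ∃ r : R, (A : Matrix n n R) = r • 1 := by
  refine ⟨fun h => ?_, fun ⟨r, hr⟩ => Subgroup.mem_center_iff.2 fun B => Subtype.ext ?_⟩
  · obtain ⟨r, -, hr⟩ := mem_center_iff.1 h
    exact ⟨r, by rw [← hr, smul_one_eq_diagonal]; rfl⟩
  · simp [hr]

theorem coe_mul_coe_inv (g : SpecialLinearGroup n R) : ↑ₘg * ↑ₘg⁻¹ = 1 := by
  rw [← coe_mul, mul_inv_cancel, coe_one]

theorem coe_inv_mul_coe (g : SpecialLinearGroup n R) : ↑ₘg⁻¹ * ↑ₘg = 1 := by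
  rw [← coe_mul, inv_mul_cancel, coe_one]

def ad (g : SpecialLinearGroup n R) : Matrix n n R →ₐ[R] Matrix n n R :=
  AlgHom.ofLinearMap (LinearMap.mulRight R ↑ₘg⁻¹ ∘ₗ LinearMap.mulLeft R ↑ₘg)
    (by simp only [LinearMap.comp_apply, LinearMap.mulLeft_apply, LinearMap.mulRight_apply,
      mul_one, coe_mul_coe_inv])
    (fun X Y => by
      simp only [LinearMap.comp_apply, LinearMap.mulLeft_apply, LinearMap.mulRight_apply,
        mul_assoc]
      rw [← mul_assoc ↑ₘg⁻¹ ↑ₘg, coe_inv_mul_coe, one_mul])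

theorem ad_apply (g : SpecialLinearGroup n R) (X : Matrix n n R) :
    ad g X = ↑ₘg * X * ↑ₘg⁻¹ := rfl

theorem trace_ad (g : SpecialLinearGroup n R) (X : Matrix n n R) :
    (ad g X).trace = X.trace := by
  rw [ad_apply, trace_mul_comm, ← mul_assoc, coe_inv_mul_coe, one_mul]

theorem coe_mul_ad_inv (g : SpecialLinearGroup n R) (X : Matrix n n R) :
    ↑ₘg * ad g⁻¹ X = X * ↑ₘg := by
  rw [ad_apply, inv_inv, ← mul_assoc, ← mul_assoc, coe_mul_coe_inv, one_mul]

theorem ad_lie (g : SpecialLinearGroup n R) (X Y : Matrix n n R) :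
    ad g ⁅X, Y⁆ = ⁅ad g X, ad g Y⁆ := by
  simp only [Ring.lie_def, map_sub, map_mul]

def IsAdInvariant (G : Subgroup (SpecialLinearGroup n R)) (W : Submodule R (Matrix n n R)) :
    Prop :=
  ∀ g ∈ G, ∀ X ∈ W, ad g X ∈ W

end Matrix.SpecialLinearGroup

open Matrix.SpecialLinearGroup

local notation "M₂" => Matrix (Fin 2) (Fin 2) ℂ
local notation "SL₂" => SpecialLinearGroup (Fin 2) ℂ

theorem mem_sl2_iff {X : M₂} : X ∈ sl2 ↔ X.trace = 0 := LinearMap.mem_ker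

theorem sl2_ne_top : sl2 ≠ ⊤ := fun h => by
  simpa [Matrix.trace_one] using mem_sl2_iff.1 (h ▸ mem_top : (1 : M₂) ∈ sl2)

theorem finrank_lt_three_of_lt_sl2 {W : Submodule ℂ M₂} (hW : W < sl2) : finrank ℂ W < 3 := by
  have hlt := Submodule.finrank_lt_finrank_of_lt hW
  have hsl2 := Submodule.finrank_lt sl2_ne_top
  simp only [finrank_matrix, Fintype.card_fin, finrank_self] at hsl2
  omega

/-- For trace-zero `X`, `Y` one has `⁅X, Y⁆ = !![w 0, 2 * w 2; 2 * w 1, -w 0]` with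
`w = slCoords X ⨯₃ slCoords Y`. -/
def slCoords : M₂ →ₗ[ℂ] Fin 3 → ℂ :=
  LinearMap.pi ![entryLinearMap ℂ ℂ 0 0, entryLinearMap ℂ ℂ 0 1, entryLinearMap ℂ ℂ 1 0]

theorem eq_zero_of_slCoords_eq_zero {X : M₂} (hX : X.trace = 0) (h : slCoords X = 0) : X = 0 := by
  have h00 := congrFun h 0
  have h01 := congrFun h 1
  have h10 := congrFun h 2
  simp only [slCoords, LinearMap.pi_apply, cons_val_zero, cons_val_one, cons_val,
    entryLinearMap_apply, Pi.zero_apply] at h00 h01 h10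
  rw [trace_fin_two, h00, zero_add] at hX
  ext i j
  fin_cases i <;> fin_cases j <;> simp [h00, h01, h10, hX]

theorem cross_slCoords_eq_zero {X Y : M₂} (hX : X.trace = 0) (hY : Y.trace = 0)
    (h : ⁅X, Y⁆ = 0) : slCoords X ⨯₃ slCoords Y = 0 := by
  rw [trace_fin_two, add_eq_zero_iff_eq_neg'] at hX hY
  have h00 := congrFun (congrFun h 0) 0
  have h01 := congrFun (congrFun h 0) 1
  have h10 := congrFun (congrFun h 1) 0
  simp only [Ring.lie_def, Matrix.sub_apply, Matrix.mul_apply, Fin.sum_univ_two, Matrix.zero_apply,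
    hX, hY] at h00 h01 h10
  rw [cross_apply]
  change ![X 0 1 * Y 1 0 - X 1 0 * Y 0 1, X 1 0 * Y 0 0 - X 0 0 * Y 1 0,
    X 0 0 * Y 0 1 - X 0 1 * Y 0 0] = 0
  rw [show X 0 1 * Y 1 0 - X 1 0 * Y 0 1 = 0 by linear_combination h00,
    show X 1 0 * Y 0 0 - X 0 0 * Y 1 0 = 0 by linear_combination h10 / 2,
    show X 0 0 * Y 0 1 - X 0 1 * Y 0 0 = 0 by linear_combination h01 / 2]
  simp

theorem lie_ne_zero_of_linearIndependent {X Y : M₂} (hX : X.trace = 0) (hY : Y.trace = 0)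
    (hXY : LinearIndependent ℂ ![X, Y]) : ⁅X, Y⁆ ≠ 0 := by
  intro h
  refine crossProduct_ne_zero_iff_linearIndependent.2 ?_ (cross_slCoords_eq_zero hX hY h)
  rw [LinearIndependent.pair_iff] at hXY ⊢
  refine fun s t hst => hXY s t (eq_zero_of_slCoords_eq_zero ?_ (by simpa using hst))
  simp [hX, hY]

theorem span_singleton_ne_sl2 (X : M₂) : ℂ ∙ X ≠ sl2 := by
  intro h
  refine LieAlgebra.SpecialLinear.sl_non_abelian (Fin 2) ℂ (by simp) ⟨fun A B => ?_⟩
  have hA : (A : M₂) ∈ ℂ ∙ X := h ▸ A.2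
  have hB : (B : M₂) ∈ ℂ ∙ X := h ▸ B.2
  exact Subtype.ext (lie_eq_zero_of_mem_span_singleton hA hB)

structure IsAdEigenvector (G : Subgroup SL₂) (X : M₂) : Prop where
  mem_sl2 : X ∈ sl2
  ne_zero : X ≠ 0
  ad_mem_span : ∀ g ∈ G, ad g X ∈ ℂ ∙ X

namespace IsAdEigenvector

variable {G : Subgroup SL₂} {X : M₂}

theorem isAdInvariant_span (hX : IsAdEigenvector G X) : IsAdInvariant G (ℂ ∙ X) := by
  intro g hg Y hY
  obtain ⟨a, rfl⟩ := mem_span_singleton.1 hY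
  rw [map_smul]
  exact smul_mem _ a (hX.ad_mem_span g hg)

theorem exists_proper_isAdInvariant (hX : IsAdEigenvector G X) :
    ∃ W : Submodule ℂ M₂, W ≤ sl2 ∧ IsAdInvariant G W ∧ W ≠ ⊥ ∧ W ≠ sl2 :=
  ⟨ℂ ∙ X, (span_singleton_le_iff_mem X sl2).2 hX.mem_sl2, hX.isAdInvariant_span,
    (span_singleton_eq_bot.not).2 hX.ne_zero, span_singleton_ne_sl2 X⟩

/-- The kernel of a nonzero singular `X` is a line, and it is preserved by `G` because
`X g = c • g X` for some `c`. -/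
theorem exists_common_eigenvector (hX : IsAdEigenvector G X) (hdet : X.det = 0) :
    ∃ v : Fin 2 → ℂ, v ≠ 0 ∧ ∀ g ∈ G, ∃ c : ℂ, (g : M₂) *ᵥ v = c • v := by
  obtain ⟨v, hv, hXv⟩ := exists_mulVec_eq_zero_iff.2 hdet
  refine ⟨v, hv, fun g hg => ?_⟩
  obtain ⟨c, hc⟩ := mem_span_singleton.1 (hX.ad_mem_span g⁻¹ (G.inv_mem hg))
  have hXgv : X *ᵥ ((g : M₂) *ᵥ v) = 0 := by
    rw [mulVec_mulVec, ← coe_mul_ad_inv, ← hc, ← mulVec_mulVec, smul_mulVec, hXv,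
      smul_zero, mulVec_zero]
  obtain ⟨c', hc'⟩ := exists_smul_eq_of_mulVec_eq_zero hX.ne_zero hv hXv hXgv
  exact ⟨c', hc'.symm⟩

end IsAdEigenvector

section AdReducible

variable {G : Subgroup SL₂} {W : Submodule ℂ M₂}

theorem exists_isAdEigenvector_of_finrank_eq_one (hW : W ≤ sl2) (hinv : IsAdInvariant G W)
    (h : finrank ℂ W = 1) : ∃ X, IsAdEigenvector G X := by
  obtain ⟨v, hv, hspan⟩ := finrank_eq_one_iff'.1 h
  refine ⟨v, hW v.2, by simpa using hv, fun g hg => mem_span_singleton.2 ?_⟩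
  obtain ⟨c, hc⟩ := hspan ⟨ad g v, hinv g hg v v.2⟩
  exact ⟨c, congrArg Subtype.val hc⟩

theorem exists_isAdEigenvector_of_finrank_eq_two (hW : W ≤ sl2) (hinv : IsAdInvariant G W)
    (h : finrank ℂ W = 2) : ∃ X, IsAdEigenvector G X := by
  obtain ⟨X, Y, hXY, rfl⟩ := exists_linearIndependent_pair_eq_span_of_finrank_eq_two h
  have hX : X ∈ span ℂ {X, Y} := subset_span (by simp)
  have hY : Y ∈ span ℂ {X, Y} := subset_span (by simp)
  refine ⟨⁅X, Y⁆, mem_sl2_iff.2 (LieAlgebra.matrix_trace_commutator_zero _ _ X Y),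
    lie_ne_zero_of_linearIndependent (mem_sl2_iff.1 (hW hX)) (mem_sl2_iff.1 (hW hY)) hXY,
    fun g hg => ?_⟩
  rw [ad_lie]
  exact lie_mem_span_lie_of_mem_span_pair (hinv g hg X hX) (hinv g hg Y hY)

theorem exists_isAdEigenvector (hW : W < sl2) (hinv : IsAdInvariant G W) (hbot : W ≠ ⊥) :
    ∃ X, IsAdEigenvector G X := by
  have hlt := finrank_lt_three_of_lt_sl2 hW
  have hpos : finrank ℂ W ≠ 0 := fun h => hbot (Submodule.finrank_eq_zero.1 h)
  obtain h | h : finrank ℂ W = 1 ∨ finrank ℂ W = 2 := by omega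
  · exact exists_isAdEigenvector_of_finrank_eq_one hW.le hinv h
  · exact exists_isAdEigenvector_of_finrank_eq_two hW.le hinv h

end AdReducible

theorem pslProj_eq_pslProj_iff {h k : SL₂} :
    pslProj h = pslProj k ↔ ∃ c : ℂ, c • (h : M₂) = k := by
  simp only [pslProj, QuotientGroup.mk'_eq_mk', mem_center_iff_exists_coe_eq_smul_one]
  constructor
  · rintro ⟨z, ⟨c, hz⟩, rfl⟩
    exact ⟨c, by rw [coe_mul, hz, Matrix.mul_smul, mul_one]⟩
  · rintro ⟨c, hc⟩
    refine ⟨h⁻¹ * k, ⟨c, ?_⟩, mul_inv_cancel_left h k⟩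
    rw [coe_mul, ← hc, Matrix.mul_smul, coe_inv_mul_coe]

theorem pslProj_commute_iff {g h : SL₂} :
    Commute (pslProj g) (pslProj h) ↔ ad g h ∈ ℂ ∙ (h : M₂) := by
  rw [commute_iff_eq, ← mul_inv_eq_iff_eq_mul, ← map_inv, ← map_mul, ← map_mul, eq_comm,
    pslProj_eq_pslProj_iff, mem_span_singleton, ad_apply, coe_mul, coe_mul]

theorem notMem_center_of_trace_eq_zero {h : SL₂} (htr : (h : M₂).trace = 0) :
    h ∉ Subgroup.center SL₂ := by
  rw [mem_center_iff_exists_coe_eq_smul_one]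
  rintro ⟨r, hr⟩
  have hr0 : r = 0 := by simpa [hr] using htr
  simpa [hr, hr0] using h.det_coe

theorem isAdEigenvector_sub_trace_smul_one {G : Subgroup SL₂} {h : SL₂}
    (hcen : h ∉ Subgroup.center SL₂) (hG : ∀ g ∈ G, ad g h ∈ ℂ ∙ (h : M₂)) :
    IsAdEigenvector G ((h : M₂) - ((h : M₂).trace / 2) • 1) := by
  set t := (h : M₂).trace
  refine ⟨mem_sl2_iff.2 ?_, fun h0 => hcen ?_, fun g hg => ?_⟩
  · simp [t, trace_sub]
  · exact mem_center_iff_exists_coe_eq_smul_one.2 ⟨t / 2, sub_eq_zero.1 h0⟩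
  · obtain ⟨c, hc⟩ := mem_span_singleton.1 (hG g hg)
    have hct : c * t = t := by simpa [t, trace_ad] using congrArg trace hc
    refine mem_span_singleton.2 ⟨c, ?_⟩
    rw [map_sub, map_smul, map_one, ← hc, smul_sub, smul_smul,
      show c * (t / 2) = t / 2 by linear_combination hct / 2]

theorem exists_isAdEigenvector_of_centralizer_ne_bot {G : Subgroup SL₂}
    (hG : Subgroup.centralizer ((G.map pslProj : Subgroup PSL2) : Set PSL2) ≠ ⊥) :
    ∃ X, IsAdEigenvector G X := by
  obtain ⟨⟨x, hx⟩, hx1⟩ := Subgroup.ne_bot_iff_exists_ne_one.1 hG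
  obtain ⟨h, rfl⟩ := QuotientGroup.mk'_surjective _ x
  have hcen : h ∉ Subgroup.center SL₂ := fun hc =>
    hx1 (Subtype.ext ((QuotientGroup.eq_one_iff h).2 hc))
  exact ⟨_, isAdEigenvector_sub_trace_smul_one hcen fun g hg =>
    pslProj_commute_iff.1 (Subgroup.mem_centralizer_iff.1 hx _ ⟨g, hg, rfl⟩)⟩

theorem IsAdEigenvector.centralizer_ne_bot {G : Subgroup SL₂} {X : M₂}
    (hX : IsAdEigenvector G X) (hdet : X.det ≠ 0) :
    Subgroup.centralizer ((G.map pslProj : Subgroup PSL2) : Set PSL2) ≠ ⊥ := by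
  obtain ⟨s, hs⟩ := IsAlgClosed.exists_pow_nat_eq X.det⁻¹ two_pos
  let h : SL₂ := ⟨s • X, by rw [det_smul, Fintype.card_fin, hs, inv_mul_cancel₀ hdet]⟩
  have hs0 : s ≠ 0 := by rintro rfl; exact hdet (by simpa using hs.symm)
  rw [Subgroup.ne_bot_iff_exists_ne_one]
  refine ⟨⟨pslProj h, Subgroup.mem_centralizer_iff.2 ?_⟩, fun h1 => ?_⟩
  · rintro _ ⟨g, hg, rfl⟩
    refine (pslProj_commute_iff.2 ?_).eq
    rw [Matrix.SpecialLinearGroup.coe_mk, map_smul, span_singleton_smul_eq (IsUnit.mk0 s hs0)]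
    exact smul_mem _ s (hX.ad_mem_span g hg)
  · refine notMem_center_of_trace_eq_zero (h := h) ?_ ((QuotientGroup.eq_one_iff h).1 ?_)
    · simp [h, trace_smul, mem_sl2_iff.1 hX.mem_sl2]
    · exact congrArg Subtype.val h1

/-- Let `G ≤ SL(2,ℂ)` have no common eigenvector. Then the centralizer in `PSL(2,ℂ)`
of the image of `G` is nontrivial if and only if the conjugation action of `G` on
`sl(2,ℂ)` admits a nonzero proper invariant subspace. -/
theorem centralizer_nontrivial_iff_adReducible
    (G : Subgroup (SpecialLinearGroup (Fin 2) ℂ))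
    (hirr : ¬ ∃ v : Fin 2 → ℂ, v ≠ 0 ∧ ∀ g ∈ G,
      ∃ c : ℂ, (g : Matrix (Fin 2) (Fin 2) ℂ) *ᵥ v = c • v) :
    Subgroup.centralizer ((G.map pslProj : Subgroup PSL2) : Set PSL2) ≠ ⊥ ↔
    ∃ W : Submodule ℂ (Matrix (Fin 2) (Fin 2) ℂ), W ≤ sl2 ∧
      (∀ g ∈ G, ∀ X ∈ W,
        (g : Matrix (Fin 2) (Fin 2) ℂ) * X
          * ((g⁻¹ : SpecialLinearGroup (Fin 2) ℂ) : Matrix (Fin 2) (Fin 2) ℂ) ∈ W) ∧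
      W ≠ ⊥ ∧ W ≠ sl2 := by
  constructor
  · intro hG
    obtain ⟨X, hX⟩ := exists_isAdEigenvector_of_centralizer_ne_bot hG
    exact hX.exists_proper_isAdInvariant
  · rintro ⟨W, hW, hinv, hbot, htop⟩
    obtain ⟨X, hX⟩ := exists_isAdEigenvector (lt_of_le_of_ne hW htop) hinv hbot
    exact hX.centralizer_ne_bot fun hdet => hirr (hX.exists_common_eigenvector hdet)
end

section
/- Let n ≥ 1, let F_n be the free group on n generators, and let ρ : F_n → SL(2,ℂ) be a group homomorphism whose image has no common eigenvector. Then the first group cohomology of F_n with coefficients in the adjoint representation Ad∘ρ on sl(2,ℂ) has complex dimension 3n − 3. -/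
/-!
A 1-cocycle `θ : G → M` is the same thing as a homomorphism `g ↦ (θ g, g)` into `M ⋊ G`
splitting the projection to `G`, and a homomorphism out of a free group may be prescribed
freely on the generators. Hence `dim Z¹(F_n, M) = n · dim M`, while `B¹ ≅ M / M^{F_n}`, so
`dim H¹(F_n, M) = n · dim M - dim M + dim M^{F_n}`.

For `M = sl(2,ℂ)` with the adjoint action the invariants vanish: an invariant `X ≠ 0` commutes
with every `ρ γ`, and being trace-free it is not scalar, so its eigenspaces are lines; each
`ρ γ` preserves them, which produces a common eigenvector. Thus `dim H¹ = 3n - 3`.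
-/

open Matrix

open Module

theorem Submodule.eq_span_singleton_of_ne_top {K V : Type*} [Field K] [AddCommGroup V]
    [Module K V] (hV : finrank K V = 2) {p : Submodule K V} (hp : p ≠ ⊤) {v : V} (hvp : v ∈ p)
    (hv : v ≠ 0) : p = K ∙ v := by
  have : FiniteDimensional K V := Module.finite_of_finrank_eq_succ hV
  have hle : K ∙ v ≤ p := (Submodule.span_singleton_le_iff_mem _ _).2 hvp
  have hlt := Submodule.finrank_lt hp
  have hmono := Submodule.finrank_mono hle
  rw [finrank_span_singleton hv] at hmono
  exact (Submodule.eq_of_le_of_finrank_eq hle (by rw [finrank_span_singleton hv]; omega)).symm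

theorem Matrix.exists_common_eigenvector_of_trace_eq_zero {K : Type*} [Field K] [IsAlgClosed K]
    [NeZero (2 : K)] {X : Matrix (Fin 2) (Fin 2) K} (htr : X.trace = 0) (hX : X ≠ 0) :
    ∃ v : Fin 2 → K, v ≠ 0 ∧ ∀ B : Matrix (Fin 2) (Fin 2) K, Commute B X →
      ∃ c : K, B *ᵥ v = c • v := by
  obtain ⟨μ, hμ⟩ := End.exists_eigenvalue (toLin' X)
  obtain ⟨v, hv⟩ := hμ.exists_hasEigenvector
  have hne : End.eigenspace (toLin' X) μ ≠ ⊤ := by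
    intro htop
    rw [End.eigenspace_def, LinearMap.ker_eq_top, sub_eq_zero] at htop
    have hXμ : X = μ • 1 := toLin'.injective (by rw [htop, map_smul, toLin'_one]; rfl)
    have hμ0 : μ = 0 := by simpa [hXμ, two_ne_zero] using htr
    exact hX (by simpa [hμ0] using hXμ)
  have hspan := Submodule.eq_span_singleton_of_ne_top (by simp) hne hv.1 hv.2
  refine ⟨v, hv.2, fun B hB => ?_⟩
  have hBv : B *ᵥ v ∈ End.eigenspace (toLin' X) μ := by
    have hXv : X *ᵥ v = μ • v := hv.apply_eq_smul
    rw [End.mem_eigenspace_iff, toLin'_apply, mulVec_mulVec, ← hB.eq, ← mulVec_mulVec, hXv,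
      mulVec_smul]
  rw [hspan, Submodule.mem_span_singleton] at hBv
  obtain ⟨c, hc⟩ := hBv
  exact ⟨c, hc.symm⟩

namespace Representation

variable {k G M : Type*} [CommRing k] [Group G] [AddCommGroup M] [Module k M]
  (σ : Representation k G M)

def toMulAut : G →* MulAut (Multiplicative M) where
  toFun g := AddEquiv.toMultiplicative
    { toFun := σ g
      invFun := σ g⁻¹
      left_inv x := by simp [← Module.End.mul_apply, ← map_mul]
      right_inv x := by simp [← Module.End.mul_apply, ← map_mul]
      map_add' := map_add _ }
  map_one' := by ext; simp
  map_mul' g h := by ext; simp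

@[simp]
lemma toAdd_toMulAut_apply (g : G) (x : Multiplicative M) :
    (σ.toMulAut g x).toAdd = σ g x.toAdd := rfl

end Representation

universe u

namespace groupCohomology

open SemidirectProduct

section Semidirect

variable {k G : Type u} [CommRing k] [Group G] {A : Rep k G}

def cocycles₁.toSemidirectProduct (θ : cocycles₁ A) :
    G →* Multiplicative A ⋊[A.ρ.toMulAut] G where
  toFun g := ⟨.ofAdd (θ g), g⟩
  map_one' := by ext <;> simp [cocycles₁_map_one]
  map_mul' g h := by
    ext
    · simp [mul_left, (mem_cocycles₁_iff (θ : G → A)).1 θ.2 g h, add_comm]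
    · rfl

lemma mem_cocycles₁_of_right_eq (φ : G →* Multiplicative A ⋊[A.ρ.toMulAut] G)
    (hφ : ∀ g, (φ g).right = g) : (fun g => (φ g).left.toAdd) ∈ cocycles₁ A := by
  rw [mem_cocycles₁_iff]
  intro g h
  simp [map_mul, mul_left, hφ, add_comm]

end Semidirect

section FreeGroup

variable {k ι : Type u} [CommRing k] {A : Rep k (FreeGroup ι)}

theorem cocycles₁_ext_freeGroup {θ₁ θ₂ : cocycles₁ A}
    (h : ∀ i, θ₁ (FreeGroup.of i) = θ₂ (FreeGroup.of i)) : θ₁ = θ₂ := by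
  have hφ : cocycles₁.toSemidirectProduct θ₁ = cocycles₁.toSemidirectProduct θ₂ :=
    FreeGroup.ext_hom _ _ fun i => by simp [cocycles₁.toSemidirectProduct, h i]
  exact cocycles₁_ext fun g => congrArg (fun x => x.left.toAdd) (DFunLike.congr_fun hφ g)

theorem exists_cocycles₁_freeGroup (f : ι → A) :
    ∃ θ : cocycles₁ A, ∀ i, θ (FreeGroup.of i) = f i := by
  let φ : FreeGroup ι →* Multiplicative A ⋊[A.ρ.toMulAut] FreeGroup ι :=
    FreeGroup.lift fun i => ⟨.ofAdd (f i), FreeGroup.of i⟩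
  have hφ : rightHom.comp φ = MonoidHom.id _ := FreeGroup.ext_hom _ _ fun i => by simp [φ]
  refine ⟨⟨_, mem_cocycles₁_of_right_eq φ fun g => DFunLike.congr_fun hφ g⟩, fun i => ?_⟩
  simp [φ]

variable (A) in
noncomputable def cocycles₁FreeGroupEquiv : cocycles₁ A ≃ₗ[k] (ι → A) :=
  LinearEquiv.ofBijective
    { toFun θ i := θ (FreeGroup.of i)
      map_add' _ _ := rfl
      map_smul' _ _ := rfl }
    ⟨fun _ _ h => cocycles₁_ext_freeGroup (congrFun h),
      fun f => (exists_cocycles₁_freeGroup f).imp fun _ hθ => funext hθ⟩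

end FreeGroup

section Dimension

variable {k : Type u} [Field k]

theorem finrank_coboundaries₁_add_finrank_invariants {G : Type u} [Group G] (A : Rep k G)
    [FiniteDimensional k A] :
    finrank k (coboundaries₁ A) + finrank k A.ρ.invariants = finrank k A := by
  rw [← d₀₁_ker_eq_invariants]
  exact LinearMap.finrank_range_add_finrank_ker (d₀₁ A).hom

theorem finrank_H1_add_finrank_coboundaries₁ {G : Type u} [Group G] (A : Rep k G)
    [FiniteDimensional k (cocycles₁ A)] :
    finrank k (H1 A) + finrank k (coboundaries₁ A) = finrank k (cocycles₁ A) := by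
  have hsurj : Function.Surjective (H1π A) :=
    (ModuleCat.epi_iff_surjective _).1 inferInstance
  have hker : LinearMap.ker (H1π A).hom = (coboundaries₁ A).comap (cocycles₁ A).subtype := by
    ext x
    exact H1π_eq_zero_iff x
  have h := LinearMap.finrank_range_add_finrank_ker (H1π A).hom
  rwa [LinearMap.range_eq_top.2 hsurj, finrank_top, hker,
    (Submodule.comapSubtypeEquivOfLe (coboundaries₁_le_cocycles₁ A)).finrank_eq] at h

theorem finrank_H1_freeGroup_add_finrank {ι : Type u} [Fintype ι] (A : Rep k (FreeGroup ι))
    [FiniteDimensional k A] :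
    finrank k (H1 A) + finrank k A = Fintype.card ι * finrank k A + finrank k A.ρ.invariants := by
  have hZ := (cocycles₁FreeGroupEquiv A).finrank_eq
  have : FiniteDimensional k (cocycles₁ A) := (cocycles₁FreeGroupEquiv A).symm.finiteDimensional
  rw [finrank_pi_fintype, Finset.sum_const, Finset.card_univ, smul_eq_mul] at hZ
  have := finrank_H1_add_finrank_coboundaries₁ A
  have := finrank_coboundaries₁_add_finrank_invariants A
  omega

end Dimension

end groupCohomology

theorem finrank_sl2 : finrank ℂ sl2 = 3 := by
  have hsurj : Function.Surjective (traceLinearMap (Fin 2) ℂ ℂ) := fun c =>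
    ⟨Matrix.single 0 0 c, by simp⟩
  have h := LinearMap.finrank_range_add_finrank_ker (traceLinearMap (Fin 2) ℂ ℂ)
  rw [LinearMap.range_eq_top.2 hsurj] at h
  simp only [finrank_top, finrank_self, finrank_matrix, Fintype.card_fin] at h
  rw [sl2]
  omega

theorem sl2_invariants_eq_bot {G : Type*} [Group G] (ρ : G →* SpecialLinearGroup (Fin 2) ℂ)
    (hirr : ¬ ∃ v : Fin 2 → ℂ, v ≠ 0 ∧ ∀ γ : G,
      ∃ c : ℂ, ((ρ γ : SpecialLinearGroup (Fin 2) ℂ) : Matrix (Fin 2) (Fin 2) ℂ) *ᵥ v = c • v)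
    (σ : Representation ℂ G sl2)
    (hσ : ∀ (γ : G) (X : sl2),
      (σ γ X : Matrix (Fin 2) (Fin 2) ℂ)
        = ((ρ γ : SpecialLinearGroup (Fin 2) ℂ) : Matrix (Fin 2) (Fin 2) ℂ)
            * (X : Matrix (Fin 2) (Fin 2) ℂ)
            * (((ρ γ)⁻¹ : SpecialLinearGroup (Fin 2) ℂ) : Matrix (Fin 2) (Fin 2) ℂ)) :
    σ.invariants = ⊥ := by
  refine (Submodule.eq_bot_iff _).2 fun X hX => ?_
  by_contra hX0
  obtain ⟨v, hv, hcomm⟩ :=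
    exists_common_eigenvector_of_trace_eq_zero X.2 fun h => hX0 (Subtype.ext h)
  refine hirr ⟨v, hv, fun γ => hcomm _ ?_⟩
  have hconj := hσ γ X
  rw [hX γ] at hconj
  have hinv : (((ρ γ)⁻¹ : SpecialLinearGroup (Fin 2) ℂ) : Matrix (Fin 2) (Fin 2) ℂ) * ρ γ = 1 :=
    congrArg (fun g : SpecialLinearGroup (Fin 2) ℂ => (g : Matrix (Fin 2) (Fin 2) ℂ))
      (inv_mul_cancel (ρ γ))
  calc _ = ((ρ γ : SpecialLinearGroup (Fin 2) ℂ) : Matrix (Fin 2) (Fin 2) ℂ) * X *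
        ((((ρ γ)⁻¹ : SpecialLinearGroup (Fin 2) ℂ) : Matrix (Fin 2) (Fin 2) ℂ) * ρ γ) := by
        rw [hinv, mul_one]
    _ = _ := by rw [← mul_assoc, ← hconj]

theorem dim_H1_adjoint_irreducible_general
    (n : ℕ)
    (ρ : FreeGroup (Fin n) →* SpecialLinearGroup (Fin 2) ℂ)
    (hirr : ¬ ∃ v : Fin 2 → ℂ, v ≠ 0 ∧ ∀ γ : FreeGroup (Fin n),
      ∃ c : ℂ, ((ρ γ : SpecialLinearGroup (Fin 2) ℂ) : Matrix (Fin 2) (Fin 2) ℂ) *ᵥ v = c • v)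
    (σ : Representation ℂ (FreeGroup (Fin n)) sl2)
    (hσ : ∀ (γ : FreeGroup (Fin n)) (X : sl2),
      (σ γ X : Matrix (Fin 2) (Fin 2) ℂ)
        = ((ρ γ : SpecialLinearGroup (Fin 2) ℂ) : Matrix (Fin 2) (Fin 2) ℂ)
            * (X : Matrix (Fin 2) (Fin 2) ℂ)
            * (((ρ γ)⁻¹ : SpecialLinearGroup (Fin 2) ℂ) : Matrix (Fin 2) (Fin 2) ℂ)) :
    Module.finrank ℂ (groupCohomology.H1 (Rep.of σ)) = 3 * n - 3 := by
  have hdim := groupCohomology.finrank_H1_freeGroup_add_finrank (Rep.of σ)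
  have hinv : finrank ℂ σ.invariants = 0 := by
    rw [sl2_invariants_eq_bot ρ hirr σ hσ, finrank_bot]
  change _ + finrank ℂ sl2 = _ * finrank ℂ sl2 + finrank ℂ σ.invariants at hdim
  rw [finrank_sl2, hinv, Fintype.card_fin] at hdim
  omega

/-- If `ρ : F_n → SL(2,ℂ)` is a representation of the free group of rank `n ≥ 1` whose
image has no common eigenvector, then `dim_ℂ H¹(F_n, Ad ∘ ρ) = 3n − 3`, where `Ad ∘ ρ`
is the adjoint action `γ · X = ρ(γ) X ρ(γ)⁻¹` on `sl(2,ℂ)`. -/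
theorem dim_H1_adjoint_irreducible
    (n : ℕ) (hn : 1 ≤ n)
    (ρ : FreeGroup (Fin n) →* SpecialLinearGroup (Fin 2) ℂ)
    (hirr : ¬ ∃ v : Fin 2 → ℂ, v ≠ 0 ∧ ∀ γ : FreeGroup (Fin n),
      ∃ c : ℂ, ((ρ γ : SpecialLinearGroup (Fin 2) ℂ) : Matrix (Fin 2) (Fin 2) ℂ) *ᵥ v = c • v)
    (σ : Representation ℂ (FreeGroup (Fin n)) sl2)
    (hσ : ∀ (γ : FreeGroup (Fin n)) (X : sl2),
      (σ γ X : Matrix (Fin 2) (Fin 2) ℂ)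
        = ((ρ γ : SpecialLinearGroup (Fin 2) ℂ) : Matrix (Fin 2) (Fin 2) ℂ)
            * (X : Matrix (Fin 2) (Fin 2) ℂ)
            * (((ρ γ)⁻¹ : SpecialLinearGroup (Fin 2) ℂ) : Matrix (Fin 2) (Fin 2) ℂ)) :
    Module.finrank ℂ (groupCohomology.H1 (Rep.of σ)) = 3 * n - 3 :=
  dim_H1_adjoint_irreducible_general n ρ hirr σ hσ
end

section
/- For every triple (x, y, z) ∈ ℂ³ there exist matrices A, B ∈ SL(2,ℂ) such that tr(A) = x, tr(B) = y and tr(AB) = z. -/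
open Matrix

/-- For every `(x, y, z) ∈ ℂ³` there exist `A, B ∈ SL(2,ℂ)` with `tr A = x`,
`tr B = y` and `tr (AB) = z`. -/
theorem trace_triple_surjective (x y z : ℂ) :
    ∃ A B : SpecialLinearGroup (Fin 2) ℂ,
      Matrix.trace (A : Matrix (Fin 2) (Fin 2) ℂ) = x ∧
      Matrix.trace (B : Matrix (Fin 2) (Fin 2) ℂ) = y ∧
      Matrix.trace ((A * B : SpecialLinearGroup (Fin 2) ℂ) : Matrix (Fin 2) (Fin 2) ℂ) = z := by
  obtain ⟨s, hs⟩ := IsAlgClosed.exists_pow_nat_eq ((x - y) ^ 2 - 4 * (2 - z)) (n := 2) (by norm_num)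
  set a : ℂ := (s - (x - y)) / 2 with ha
  have key : a ^ 2 + (x - y) * a + 2 = z := by
    rw [ha]; linear_combination hs / 4
  refine ⟨⟨!![x, -1; 1, 0], by simp [Matrix.det_fin_two_of]⟩,
    ⟨!![a, 1; a * (y - a) - 1, y - a], by simp [Matrix.det_fin_two_of]⟩, ?_, ?_, ?_⟩
  · simp [Matrix.trace_fin_two_of]
  · simp [Matrix.trace_fin_two_of]
  · show Matrix.trace (!![x, -1; 1, 0] * !![a, 1; a * (y - a) - 1, y - a]) = z
    rw [show (!![x, -1; 1, 0] * !![a, 1; a * (y - a) - 1, y - a]) =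
      !![x * a - (a * (y - a) - 1), x - (y - a); a, 1] by
        ext i j; fin_cases i <;> fin_cases j <;>
          simp [Matrix.mul_apply, Fin.sum_univ_two] <;> ring]
    simp [Matrix.trace_fin_two_of]
    linear_combination key
end

section
/- The image of the map from SL(2,ℂ) × SL(2,ℂ) to ℂ⁴ sending (A, B) to ((tr A)², (tr B)², (tr AB)², tr A · tr B · tr AB) is exactly the set {(X, Y, Z, W) ∈ ℂ⁴ : W² = X·Y·Z}. -/
/-!
The map factors as `(A, B) ↦ (tr A, tr B, tr AB)` followed by
`(x, y, z) ↦ (x², y², z², xyz)`. Over an algebraically closed field the first map is onto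
(Fricke): with `A = [[x, -1], [1, 0]]` and `B = [[0, b], [b - z, y]]`, where `b (z - b) = 1`,
one gets `tr AB = z`. The second map has image `W² = XYZ`: choose square roots `x, y` of
`X, Y` and put `z = W / (xy)`, or any square root of `Z` when `xy = 0` (then `W = 0`).
-/

open Matrix Polynomial

variable {K : Type*} [Field K] [IsAlgClosed K]

theorem IsAlgClosed.exists_mul_sub_eq_one (z : K) : ∃ b : K, b * (z - b) = 1 := by
  have hdeg : (C 1 * X ^ 2 + C (-z) * X + C 1 : K[X]).degree ≠ 0 := by
    rw [degree_quadratic one_ne_zero]; decide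
  obtain ⟨b, hb⟩ := IsAlgClosed.exists_root _ hdeg
  refine ⟨b, ?_⟩
  simp only [IsRoot, eval_add, eval_mul, eval_C, eval_pow, eval_X] at hb
  linear_combination -hb

namespace Matrix.SpecialLinearGroup

def traceTriple {R : Type*} [CommRing R]
    (p : SpecialLinearGroup (Fin 2) R × SpecialLinearGroup (Fin 2) R) : R × R × R :=
  (trace (p.1 : Matrix (Fin 2) (Fin 2) R), trace (p.2 : Matrix (Fin 2) (Fin 2) R),
    trace ((p.1 * p.2 : SpecialLinearGroup (Fin 2) R) : Matrix (Fin 2) (Fin 2) R))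

theorem traceTriple_surjective : Function.Surjective (traceTriple (R := K)) := by
  rintro ⟨x, y, z⟩
  obtain ⟨b, hb⟩ := IsAlgClosed.exists_mul_sub_eq_one z
  let A : SpecialLinearGroup (Fin 2) K := ⟨!![x, -1; 1, 0], by simp [det_fin_two_of]⟩
  let B : SpecialLinearGroup (Fin 2) K :=
    ⟨!![0, b; b - z, y], by rw [det_fin_two_of]; linear_combination hb⟩
  refine ⟨(A, B), Prod.ext (by simp [traceTriple, A]) (Prod.ext (by simp [traceTriple, B]) ?_)⟩
  change trace (!![x, -1; 1, 0] * !![0, b; b - z, y]) = z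
  rw [mul_fin_two, trace_fin_two_of]
  ring

end Matrix.SpecialLinearGroup

theorem range_sq_sq_sq_mul :
    Set.range (fun t : K × K × K => (t.1 ^ 2, t.2.1 ^ 2, t.2.2 ^ 2, t.1 * t.2.1 * t.2.2))
      = {q : K × K × K × K | q.2.2.2 ^ 2 = q.1 * q.2.1 * q.2.2.1} := by
  ext ⟨X, Y, Z, W⟩
  constructor
  · rintro ⟨⟨x, y, z⟩, h⟩
    simp only [Prod.mk.injEq] at h
    obtain ⟨rfl, rfl, rfl, rfl⟩ := h
    simp only [Set.mem_ofPred_eq]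
    ring
  · intro h
    simp only [Set.mem_ofPred_eq] at h
    obtain ⟨x, rfl⟩ := IsAlgClosed.exists_pow_nat_eq X two_pos
    obtain ⟨y, rfl⟩ := IsAlgClosed.exists_pow_nat_eq Y two_pos
    by_cases hxy : x * y = 0
    · have hW : W = 0 := pow_eq_zero_iff two_ne_zero |>.mp <| by
        rw [h, ← mul_pow, hxy]; ring
      obtain ⟨z, rfl⟩ := IsAlgClosed.exists_pow_nat_eq Z two_pos
      exact ⟨(x, y, z), by simp [hW, hxy]⟩
    · refine ⟨(x, y, W / (x * y)), ?_⟩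
      simp only [Prod.mk.injEq, true_and]
      constructor
      · rw [div_pow, h, ← mul_pow, mul_div_cancel_left₀ _ (pow_ne_zero 2 hxy)]
      · exact mul_div_cancel₀ W hxy

/-- The image of `SL(2,ℂ) × SL(2,ℂ) → ℂ⁴`,
`(A, B) ↦ ((tr A)², (tr B)², (tr AB)², tr A · tr B · tr AB)`, is exactly the
hypersurface `{(X, Y, Z, W) : W² = X Y Z}`. -/
theorem range_character_map_F2 :
    Set.range (fun p : SpecialLinearGroup (Fin 2) ℂ × SpecialLinearGroup (Fin 2) ℂ =>
      ((Matrix.trace (p.1 : Matrix (Fin 2) (Fin 2) ℂ)) ^ 2,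
       (Matrix.trace (p.2 : Matrix (Fin 2) (Fin 2) ℂ)) ^ 2,
       (Matrix.trace ((p.1 * p.2 : SpecialLinearGroup (Fin 2) ℂ)
          : Matrix (Fin 2) (Fin 2) ℂ)) ^ 2,
       Matrix.trace (p.1 : Matrix (Fin 2) (Fin 2) ℂ)
         * Matrix.trace (p.2 : Matrix (Fin 2) (Fin 2) ℂ)
         * Matrix.trace ((p.1 * p.2 : SpecialLinearGroup (Fin 2) ℂ)
             : Matrix (Fin 2) (Fin 2) ℂ)))
    = {q : ℂ × ℂ × ℂ × ℂ | q.2.2.2 ^ 2 = q.1 * q.2.1 * q.2.2.1} := by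
  change Set.range ((fun t : ℂ × ℂ × ℂ => (t.1 ^ 2, t.2.1 ^ 2, t.2.2 ^ 2, t.1 * t.2.1 * t.2.2))
    ∘ SpecialLinearGroup.traceTriple) = _
  rw [SpecialLinearGroup.traceTriple_surjective.range_comp, range_sq_sq_sq_mul]
end
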